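/- For n ≥ 2, the reversal of the identity permutation, w = R(id) with one-line notation n (n−1) … 2 1, lies in a γ-orbit of size exactly 2, where γ = I ∘ F^{-1} ∘ C ∘ F. -/

import Mathlib

/-- The cycle of `w` containing `x`, listed starting at `x`:
`[x, w x, w² x, …]` with each element appearing once. -/
def cyc {n : ℕ} (w : Equiv.Perm (Fin n)) (x : Fin n) : List (Fin n) :=
  (List.range n).foldl (fun acc k => if (w ^ k) x ∈ acc then acc else acc ++ [(w ^ k) x]) []

/-- The Rényi–Foata word of `w`: write the canonical cycle decomposition
(each cycle starting with its largest element, cycles listed in increasing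
order of largest elements) and drop the parentheses. -/
def foataWord {n : ℕ} (w : Equiv.Perm (Fin n)) : List (Fin n) :=
  ((List.finRange n).filter (fun x => decide (∀ y ∈ cyc w x, y ≤ x))).flatMap (cyc w)

/-- The Rényi–Foata map, as a function `Fin n → Fin n` reading off the word. -/
def foataFun {n : ℕ} (w : Equiv.Perm (Fin n)) : Fin n → Fin n :=
  fun i => (foataWord w).getD i.val ⟨0, i.pos⟩

/-- One-line notation of a permutation, as a list of values in `Fin n`. -/
def oneLineF {n : ℕ} (w : Equiv.Perm (Fin n)) : List (Fin n) :=
  (List.finRange n).map w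

/-- One-line notation with natural-number entries (0-indexed values). -/
def oneLineN {n : ℕ} (w : Equiv.Perm (Fin n)) : List ℕ :=
  (List.finRange n).map fun i => (w i : ℕ)

/-- The Rényi–Foata word with natural-number entries. -/
def wordN {n : ℕ} (w : Equiv.Perm (Fin n)) : List ℕ :=
  (foataWord w).map Fin.val

/-- `i` is a record (left-to-right maximum) position of the word `L`. -/
def recB (L : List ℕ) (i : ℕ) : Bool :=
  decide (i < L.length ∧ ∀ j < i, L.getD j 0 < L.getD i 0)

/-- Number of records (left-to-right maxima) of the word `L`. -/
def recordCount (L : List ℕ) : ℕ :=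
  ((List.range L.length).filter (recB L)).length

/-- Number of fixed points (1-cycles) of `w`. -/
def fixCount {n : ℕ} (w : Equiv.Perm (Fin n)) : ℕ :=
  (Finset.univ.filter fun i : Fin n => w i = i).card

/-- `IsPhi w w'` says that `w' = φ(w)` where `φ = F ∘ I ∘ F⁻¹ ∘ R`:
first reverse the one-line notation of `w`, then apply `F⁻¹` (giving the
unique `u` whose Foata word is that reversal), invert `u`, and apply `F`. -/
def IsPhi {n : ℕ} (w w' : Equiv.Perm (Fin n)) : Prop :=
  ∃ u : Equiv.Perm (Fin n),
    foataWord u = (oneLineF w).reverse ∧ oneLineF w' = foataWord u⁻¹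

/-- `IsPhiBar w w'` says that `w' = φ̄(w)` where `φ̄ = I ∘ F⁻¹ ∘ R ∘ F`:
apply `F` to `w`, reverse the resulting word, apply `F⁻¹`, and invert. -/
def IsPhiBar {n : ℕ} (w w' : Equiv.Perm (Fin n)) : Prop :=
  foataWord w'⁻¹ = (foataWord w).reverse

/-- `IsGamma w w'` says that `w' = γ(w)` where `γ = I ∘ F⁻¹ ∘ C ∘ F`:
apply `F` to `w`, complement each entry of the resulting word, apply `F⁻¹`,
and invert. -/
def IsGamma {n : ℕ} (w w' : Equiv.Perm (Fin n)) : Prop :=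
  foataWord w'⁻¹ = (foataWord w).map Fin.rev


/-!
The decreasing permutation `R` is the involution `k ↦ n-1-k`, so its Foata word lists the
transpositions `(n-1-k k)`, larger letter first, in increasing order, preceded by the middle fixed
point when `n` is odd. Complementing this word swaps the letters within each pair; cutting the
result at its new records exhibits it as the Foata word of the involution `u = (n-1) ⋯ 2 1 n`.
A Foata word is cut into cycles exactly at its records, so `F` is injective; as `R` and `u` are
involutions, `γ R = u` and `γ u = R`, and `u ≠ R` once `n ≥ 2`.
-/

open Function

theorem List.foldl_range_appendIfNew {α : Type*} [DecidableEq α] (g : ℕ → α) {m : ℕ}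
    (hinj : Set.InjOn g (Set.Iio m)) (hcov : ∀ k, g k ∈ (List.range m).map g) (t : ℕ) :
    (List.range t).foldl (fun acc k => if g k ∈ acc then acc else acc ++ [g k]) [] =
      (List.range (min t m)).map g := by
  induction t with
  | zero => simp
  | succ t ih =>
    rw [List.range_succ, List.foldl_append, ih]
    by_cases ht : t < m
    · have hnew : g t ∉ (List.range t).map g := by
        simp only [List.mem_map, List.mem_range, not_exists, not_and]
        exact fun k hk hkt => hk.ne (hinj (hk.trans ht) ht hkt)
      rw [min_eq_left ht.le, min_eq_left ht, List.range_succ]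
      simp [hnew]
    · rw [min_eq_right (not_lt.1 ht), min_eq_right (by omega)]
      simp [hcov t]

theorem List.flatMap_filter_eq_flatMap_ite {α β : Type*} (l : List α) (p : α → Bool)
    (g : α → List β) : (l.filter p).flatMap g = l.flatMap fun a => if p a then g a else [] := by
  induction l with
  | nil => rfl
  | cons a l ih => by_cases ha : p a <;> simp [ha, ih]

section MaxHeadedBlocks

variable {α : Type*} [LinearOrder α]

def IsMaxHeaded (y : α) (l : List α) : Prop :=
  ∃ t, l = y :: t ∧ ∀ z ∈ t, z < y

theorem takeWhile_lt_flatMap_eq_nil {y : α} {M : List α} {f : α → List α}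
    (hM : ∀ z ∈ M, y < z) (hf : ∀ z ∈ M, IsMaxHeaded z (f z)) :
    (M.flatMap f).takeWhile (· < y) = [] := by
  cases M with
  | nil => rfl
  | cons z M =>
    obtain ⟨t, ht, -⟩ := hf z List.mem_cons_self
    simp [ht, (hM z List.mem_cons_self).le]

-- Each block ends just before the first later letter exceeding its head.
theorem eq_of_flatMap_eq_of_isMaxHeaded {M M' : List α} {f f' : α → List α}
    (hM : M.Pairwise (· < ·)) (hM' : M'.Pairwise (· < ·))
    (hf : ∀ y ∈ M, IsMaxHeaded y (f y)) (hf' : ∀ y ∈ M', IsMaxHeaded y (f' y))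
    (h : M.flatMap f = M'.flatMap f') : M = M' ∧ ∀ y ∈ M, f y = f' y := by
  induction M generalizing M' with
  | nil =>
    cases M' with
    | nil => simp
    | cons y' M' =>
      obtain ⟨t', ht', -⟩ := hf' y' List.mem_cons_self
      simp [ht'] at h
  | cons y M ih =>
    obtain ⟨t, ht, htlt⟩ := hf y List.mem_cons_self
    cases M' with
    | nil => simp [ht] at h
    | cons y' M' =>
      obtain ⟨t', ht', htlt'⟩ := hf' y' List.mem_cons_self
      simp only [List.flatMap_cons, ht, ht', List.cons_append, List.cons.injEq] at h
      obtain ⟨rfl, h⟩ := h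
      have hrest := fun {y} (hy : y ∈ M) => hf y (List.mem_cons_of_mem _ hy)
      have hrest' := fun {y} (hy : y ∈ M') => hf' y (List.mem_cons_of_mem _ hy)
      have htt' : t = t' := by
        simpa [List.takeWhile_append_of_pos (decide_eq_true <| htlt · ·),
          List.takeWhile_append_of_pos (decide_eq_true <| htlt' · ·),
          takeWhile_lt_flatMap_eq_nil (fun _ => List.rel_of_pairwise_cons hM) (fun _ => hrest),
          takeWhile_lt_flatMap_eq_nil (fun _ => List.rel_of_pairwise_cons hM') (fun _ => hrest')]
          using congrArg (List.takeWhile (· < y)) h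
      subst htt'
      obtain ⟨rfl, hfM⟩ := ih hM.of_cons hM'.of_cons (fun _ => hrest) (fun _ => hrest')
        (List.append_cancel_left h)
      refine ⟨rfl, fun z hz => ?_⟩
      rcases List.mem_cons.1 hz with rfl | hz
      · rw [ht, ht']
      · exact hfM z hz

end MaxHeadedBlocks

def involutionWord (f : ℕ → ℕ) (n : ℕ) : List ℕ :=
  (List.range n).flatMap fun k => if f k < k then [k, f k] else if f k = k then [k] else []

theorem lt_of_mem_involutionWord {f : ℕ → ℕ} {n x : ℕ} (hx : x ∈ involutionWord f n) :
    x < n := by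
  simp only [involutionWord, List.mem_flatMap, List.mem_range] at hx
  obtain ⟨k, hk, hx⟩ := hx
  split_ifs at hx <;> simp at hx <;> omega

def revWord (n : ℕ) : List ℕ :=
  involutionWord (fun k => n - 1 - k) n

theorem revWord_add_two (n : ℕ) : revWord (n + 2) = (revWord n).map (· + 1) ++ [n + 1, 0] := by
  rw [revWord, involutionWord, List.range_succ, List.range_succ_eq_map, List.flatMap_append,
    List.flatMap_cons, List.flatMap_map, revWord, involutionWord, List.map_flatMap]
  have hfirst : ¬ n + 2 - 1 - 0 < 0 ∧ n + 2 - 1 - 0 ≠ 0 := by omega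
  have hlast : n + 2 - 1 - (n + 1) = 0 := by omega
  simp only [hfirst, if_false, List.nil_append, List.flatMap_cons, List.flatMap_nil,
    List.append_nil, hlast, Nat.zero_lt_succ, if_true]
  congr 1
  refine List.flatMap_congr fun k hk => ?_
  have hk := List.mem_range.1 hk
  simp only [Nat.succ_eq_add_one]
  split_ifs <;> simp <;> omega

theorem map_revWord_succ (n : ℕ) : (revWord (n + 1)).map (n - ·) = revWord n ++ [n] := by
  induction n using Nat.twoStepInduction with
  | zero => rfl
  | one => rfl
  | more n ih _ =>
    have hmap : (revWord (n + 1)).map (fun x => n + 1 - x) =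
        ((revWord (n + 1)).map (n - ·)).map (· + 1) := by
      simp only [List.map_map]
      refine List.map_congr_left fun x hx => ?_
      have := lt_of_mem_involutionWord hx
      simp only [Function.comp_apply]
      omega
    rw [revWord_add_two, revWord_add_two]
    simp [Function.comp_def, hmap, ih]

section FoataWord

variable {n : ℕ}

theorem cyc_eq_map_range (w : Equiv.Perm (Fin n)) (x : Fin n) :
    cyc w x = (List.range (minimalPeriod w x)).map (fun k => (w ^ k) x) := by
  have hper : x ∈ periodicPts w := w.injective.mem_periodicPts x
  have hle : minimalPeriod w x ≤ n := by simpa using minimalPeriod_le_card (f := w) (x := x)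
  rw [cyc, List.foldl_range_appendIfNew, min_eq_right hle]
  · exact iterate_injOn_Iio_minimalPeriod
  · intro k
    rw [List.mem_map]
    exact ⟨k % minimalPeriod w x, List.mem_range.2 (Nat.mod_lt _
      (minimalPeriod_pos_of_mem_periodicPts hper)), iterate_mod_minimalPeriod_eq⟩

theorem coe_cyc (w : Equiv.Perm (Fin n)) (x : Fin n) :
    (cyc w x : Cycle (Fin n)) = periodicOrbit w x := by
  rw [cyc_eq_map_range, periodicOrbit_def]
  rfl

theorem length_cyc (w : Equiv.Perm (Fin n)) (x : Fin n) :
    (cyc w x).length = minimalPeriod w x := by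
  simp [cyc_eq_map_range]

theorem getElem_cyc (w : Equiv.Perm (Fin n)) (x : Fin n) {k : ℕ} (hk : k < (cyc w x).length) :
    (cyc w x)[k] = (w ^ k) x := by
  simp [cyc_eq_map_range]

theorem nodup_cyc (w : Equiv.Perm (Fin n)) (x : Fin n) : (cyc w x).Nodup := by
  simpa [← Cycle.nodup_coe_iff, coe_cyc] using nodup_periodicOrbit

theorem mem_cyc_iff (w : Equiv.Perm (Fin n)) {x y : Fin n} : y ∈ cyc w x ↔ w.SameCycle x y := by
  rw [← Cycle.mem_coe_iff, coe_cyc, mem_periodicOrbit_iff (w.injective.mem_periodicPts x)]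
  constructor
  · rintro ⟨k, rfl⟩
    exact Equiv.Perm.sameCycle_pow_right.2 (Equiv.Perm.SameCycle.refl w x)
  · intro h
    obtain ⟨k, -, hk⟩ := h.exists_pow_eq'
    exact ⟨k, hk⟩

theorem cyc_eq_cons (w : Equiv.Perm (Fin n)) (x : Fin n) : cyc w x = x :: (cyc w x).tail := by
  obtain ⟨m, hm⟩ := Nat.exists_eq_add_one_of_ne_zero
    (minimalPeriod_pos_of_mem_periodicPts (w.injective.mem_periodicPts x)).ne'
  simp [cyc_eq_map_range, hm, List.range_succ_eq_map]

theorem apply_getElem_cyc (w : Equiv.Perm (Fin n)) (x : Fin n) {k : ℕ}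
    (hk : k < (cyc w x).length) :
    w (cyc w x)[k] = (cyc w x)[(k + 1) % (cyc w x).length]'(Nat.mod_lt _ (by omega)) := by
  rw [getElem_cyc, getElem_cyc, length_cyc, ← Equiv.Perm.iterate_eq_pow,
    ← Equiv.Perm.iterate_eq_pow, iterate_mod_minimalPeriod_eq, iterate_succ_apply']

def cycleLeaders (w : Equiv.Perm (Fin n)) : List (Fin n) :=
  (List.finRange n).filter fun x => decide (∀ y ∈ cyc w x, y ≤ x)

theorem foataWord_eq_flatMap_cycleLeaders (w : Equiv.Perm (Fin n)) :
    foataWord w = (cycleLeaders w).flatMap (cyc w) := rfl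

theorem isMaxHeaded_cyc_of_mem_cycleLeaders {w : Equiv.Perm (Fin n)} {y : Fin n}
    (hy : y ∈ cycleLeaders w) : IsMaxHeaded y (cyc w y) := by
  have hle : ∀ z ∈ cyc w y, z ≤ y := by simpa [cycleLeaders] using hy
  have hnodup := nodup_cyc w y
  rw [cyc_eq_cons] at hle hnodup
  refine ⟨_, cyc_eq_cons w y, fun z hz => (hle z (List.mem_cons_of_mem _ hz)).lt_of_ne ?_⟩
  rintro rfl
  exact (List.nodup_cons.1 hnodup).1 hz

theorem exists_mem_cycleLeaders_mem_cyc (w : Equiv.Perm (Fin n)) (x : Fin n) :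
    ∃ y ∈ cycleLeaders w, x ∈ cyc w y := by
  obtain ⟨y, hy, hmax⟩ := (cyc w x).toFinset.exists_max_image id
    ⟨x, List.mem_toFinset.2 ((mem_cyc_iff w).2 (Equiv.Perm.SameCycle.refl w x))⟩
  simp only [List.mem_toFinset, mem_cyc_iff, id] at hy hmax
  refine ⟨y, ?_, (mem_cyc_iff w).2 hy.symm⟩
  simpa [cycleLeaders, mem_cyc_iff] using fun z hz => hmax z (hy.trans hz)

theorem apply_eq_of_cyc_eq {v w : Equiv.Perm (Fin n)} {x y : Fin n} (h : cyc v y = cyc w y)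
    (hx : x ∈ cyc w y) : v x = w x := by
  obtain ⟨k, hk, rfl⟩ := List.getElem_of_mem hx
  have hk' : k < (cyc v y).length := h ▸ hk
  calc v (cyc w y)[k] = v (cyc v y)[k] := by simp only [h]
    _ = w (cyc w y)[k] := by rw [apply_getElem_cyc v y hk', apply_getElem_cyc w y hk]; simp only [h]

theorem foataWord_injective : Injective (foataWord : Equiv.Perm (Fin n) → List (Fin n)) := by
  intro v w h
  have hsorted (u : Equiv.Perm (Fin n)) : (cycleLeaders u).Pairwise (· < ·) :=
    (List.pairwise_lt_finRange n).filter _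
  obtain ⟨hleaders, hcyc⟩ := eq_of_flatMap_eq_of_isMaxHeaded (hsorted v) (hsorted w)
    (fun _ => isMaxHeaded_cyc_of_mem_cycleLeaders) (fun _ => isMaxHeaded_cyc_of_mem_cycleLeaders) h
  ext x
  obtain ⟨y, hy, hxy⟩ := exists_mem_cycleLeaders_mem_cyc w x
  rw [apply_eq_of_cyc_eq (hcyc y (hleaders ▸ hy)) hxy]

theorem cyc_of_involutive {w : Equiv.Perm (Fin n)} (hw : Involutive w) (x : Fin n) :
    cyc w x = if w x = x then [x] else [x, w x] := by
  split_ifs with hx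
  · rw [cyc_eq_map_range, minimalPeriod_eq_one_iff_isFixedPt.2 hx]
    simp
  · have h2 : minimalPeriod w x = 2 :=
      minimalPeriod_eq_prime (by simp [IsPeriodicPt, IsFixedPt, hw x]) hx
    rw [cyc_eq_map_range, h2]
    simp [List.range_succ]

theorem map_val_foataWord_of_involutive {w : Equiv.Perm (Fin n)} (hw : Involutive w)
    {f : ℕ → ℕ} (hf : ∀ x, (w x : ℕ) = f x) :
    (foataWord w).map Fin.val = involutionWord f n := by
  have hrange : (List.finRange n).map Fin.val = List.range n :=
    List.ext_getElem (by simp) (by simp)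
  rw [foataWord_eq_flatMap_cycleLeaders, cycleLeaders, List.flatMap_filter_eq_flatMap_ite,
    List.map_flatMap, involutionWord, ← hrange, List.flatMap_map]
  refine List.flatMap_congr fun x _ => ?_
  rw [cyc_of_involutive hw, ← hf]
  rcases lt_trichotomy (w x) x with hlt | heq | hgt
  · simp [hlt, hlt.ne, hlt.le]
  · simp [heq]
  · simp [hgt.ne', not_le.2 hgt, Fin.lt_def.1 hgt |>.not_gt, (Fin.val_injective.ne hgt.ne')]

def revInit (n : ℕ) (x : Fin n) : Fin n :=
  if x.val + 1 = n then x else ⟨n - 2 - x, by omega⟩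

theorem val_revInit (x : Fin n) :
    (revInit n x : ℕ) = if x.val + 1 = n then (x : ℕ) else n - 2 - x := by
  rw [revInit]
  split_ifs <;> rfl

theorem revInit_involutive : Involutive (revInit n) := fun x => by
  ext
  simp only [val_revInit]
  split_ifs <;> omega

/-- The permutation `(n-1) (n-2) ⋯ 1 n` in one-line notation. -/
def revInitPerm (n : ℕ) : Equiv.Perm (Fin n) :=
  revInit_involutive.toPerm _

theorem revInitPerm_apply (x : Fin n) : revInitPerm n x = revInit n x := rfl

theorem revInitPerm_involutive : Involutive (revInitPerm n) :=
  Involutive.toPerm_involutive _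

theorem inv_revInitPerm : (revInitPerm n)⁻¹ = revInitPerm n :=
  Involutive.toPerm_symm _

theorem revInitPerm_ne_revPerm (hn : 2 ≤ n) : revInitPerm n ≠ Fin.revPerm := by
  intro h
  have hlast := congrArg (fun σ : Equiv.Perm (Fin n) => (σ ⟨n - 1, by omega⟩ : ℕ)) h
  simp only [revInitPerm_apply, val_revInit, Fin.revPerm_apply, Fin.val_rev] at hlast
  split_ifs at hlast <;> omega

theorem involutionWord_revInitPerm (n : ℕ) :
    involutionWord (fun k => if k + 1 = n + 1 then k else n + 1 - 2 - k) (n + 1) =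
      revWord n ++ [n] := by
  rw [involutionWord, List.range_succ, List.flatMap_append, revWord, involutionWord]
  simp only [if_true, lt_irrefl, if_false, List.flatMap_cons, List.flatMap_nil, List.append_nil]
  congr 1
  refine List.flatMap_congr fun k hk => ?_
  have hk := List.mem_range.1 hk
  simp only [show k + 1 ≠ n + 1 by omega, if_false, show n + 1 - 2 - k = n - 1 - k by omega]

theorem foataWord_revInitPerm :
    foataWord (revInitPerm n) = (foataWord Fin.revPerm).map Fin.rev := by
  apply List.map_injective_iff.2 Fin.val_injective
  have hrev : (foataWord (Fin.revPerm : Equiv.Perm (Fin n))).map Fin.val = revWord n :=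
    map_val_foataWord_of_involutive Fin.rev_involutive fun x => by simp [Fin.val_rev]; omega
  rw [map_val_foataWord_of_involutive (f := fun k => if k + 1 = n then k else n - 2 - k)
      revInitPerm_involutive val_revInit, List.map_map,
    show Fin.val ∘ Fin.rev = (n - 1 - ·) ∘ Fin.val from
      funext fun x => by simp [Fin.val_rev]; omega,
    ← List.map_map, hrev]
  cases n with
  | zero => rfl
  | succ n => rw [involutionWord_revInitPerm, Nat.add_sub_cancel, map_revWord_succ]

end FoataWord

/-- For `n ≥ 2`, the decreasing permutation
`n (n−1) ⋯ 2 1` (the reversal of the identity, i.e. `Fin.revPerm`) lies in a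
`γ`-orbit of size exactly `2`, where `γ = I ∘ F⁻¹ ∘ C ∘ F`. -/
theorem gamma_revId_orbit (n : ℕ) (hn : 2 ≤ n)
    (γ : Equiv.Perm (Fin n) → Equiv.Perm (Fin n))
    (hγ : ∀ w, IsGamma w (γ w)) :
    Function.minimalPeriod γ (Fin.revPerm : Equiv.Perm (Fin n)) = 2 := by
  have hγrev : γ Fin.revPerm = revInitPerm n := by
    rw [← inv_inv (γ _), foataWord_injective ((hγ _).trans foataWord_revInitPerm.symm),
      inv_revInitPerm]
  have hγrevInit : γ (revInitPerm n) = Fin.revPerm := by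
    refine inv_injective (foataWord_injective ?_)
    rw [hγ, foataWord_revInitPerm, List.map_map, Fin.rev_involutive.comp_self, List.map_id,
      Equiv.Perm.inv_def, Fin.revPerm_symm]
  refine minimalPeriod_eq_prime (p := 2) ?_ ?_
  · simp [IsPeriodicPt, IsFixedPt, hγrev, hγrevInit]
  · simpa [IsFixedPt, hγrev] using revInitPerm_ne_revPerm hn
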